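/- arXiv:2112.09758 — 2 statements merged into one kernel-verified Lean document; each statement's English description precedes it below -/
import Mathlib

section
/- Let b be a positive integer and A, B, C integers with A > 0, B, C nonzero, gcd(A, B) = 1, and C² = A(A² + bB⁴). Then there exist positive integers a, u, v such that a is squarefree, a divides b, A = a·u², A² + bB⁴ = a·v², and gcd(u, v) divides b. -/
/-- If C² = A(A² + bB⁴) with A > 0, gcd(A,B)=1, B,C ≠ 0, then A = a·u² and
A² + bB⁴ = a·v² with a squarefree dividing b and gcd(u,v) ∣ b. -/
theorem stmt_2 (b A B C : ℤ) (hb : 0 < b) (hB : B ≠ 0) (hC : C ≠ 0)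
    (hcop : IsCoprime A B) (hA : 0 < A)
    (heq : C ^ 2 = A * (A ^ 2 + b * B ^ 4)) :
    ∃ a u v : ℤ, 0 < a ∧ 0 < u ∧ 0 < v ∧ Squarefree a ∧ a ∣ b ∧
      A = a * u ^ 2 ∧ A ^ 2 + b * B ^ 4 = a * v ^ 2 ∧ (Int.gcd u v : ℤ) ∣ b := by
  set N : ℤ := A ^ 2 + b * B ^ 4 with hN
  have hB4 : 0 < B ^ 4 := by positivity
  have hNpos : 0 < N := by positivity
  set d : ℤ := (Int.gcd A N : ℤ) with hd
  have hgcdpos : 0 < Int.gcd A N := by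
    have : Int.gcd A N ≠ 0 := by
      simp [Int.gcd_eq_zero_iff]
      intro h; exact absurd h hA.ne'
    exact Nat.pos_of_ne_zero this
  have hdpos : 0 < d := by rw [hd]; exact_mod_cast hgcdpos
  have hdA : d ∣ A := Int.gcd_dvd_left _ _
  have hdN : d ∣ N := Int.gcd_dvd_right _ _
  set A' : ℤ := A / d with hA'
  set N' : ℤ := N / d with hN'
  have hAeq : A = d * A' := (Int.mul_ediv_cancel' hdA).symm
  have hNeq : N = d * N' := (Int.mul_ediv_cancel' hdN).symm
  have hcop' : IsCoprime A' N' := by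
    rw [Int.isCoprime_iff_gcd_eq_one]
    exact Int.gcd_div_gcd_div_gcd hgcdpos
  have hA'pos : 0 < A' := by
    rcases lt_trichotomy A' 0 with h | h | h
    · nlinarith
    · rw [h, mul_zero] at hAeq; exact absurd hAeq.symm hA.ne
    · exact h
  have hN'pos : 0 < N' := by
    rcases lt_trichotomy N' 0 with h | h | h
    · nlinarith
    · rw [h, mul_zero] at hNeq; exact absurd hNeq.symm hNpos.ne
    · exact h
  -- C = d * c
  have hdC : d ∣ C := by
    rw [← Int.pow_dvd_pow_iff (two_ne_zero)]
    rw [heq, hAeq, hNeq]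
    exact ⟨A' * N', by ring⟩
  obtain ⟨c, hc⟩ := hdC
  have hc2 : A' * N' = c ^ 2 := by
    have h1 : d ^ 2 * (A' * N') = d ^ 2 * c ^ 2 := by
      calc d ^ 2 * (A' * N') = (d * A') * (d * N') := by ring
        _ = A * N := by rw [← hAeq, ← hNeq]
        _ = C ^ 2 := heq.symm
        _ = (d * c) ^ 2 := by rw [hc]
        _ = d ^ 2 * c ^ 2 := by ring
    have hd2 : (d : ℤ) ^ 2 ≠ 0 := pow_ne_zero _ hdpos.ne'
    exact mul_left_cancel₀ hd2 h1
  obtain ⟨u0, hu0⟩ := Int.sq_of_isCoprime hcop' hc2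
  have hA'sq : A' = u0 ^ 2 := by
    rcases hu0 with h | h
    · exact h
    · nlinarith [sq_nonneg u0]
  obtain ⟨v0, hv0⟩ := Int.sq_of_isCoprime hcop'.symm (by rw [mul_comm]; exact hc2)
  have hN'sq : N' = v0 ^ 2 := by
    rcases hv0 with h | h
    · exact h
    · nlinarith [sq_nonneg v0]
  -- squarefree decomposition of d
  obtain ⟨e, s, hepos, hspos, hse, hesf⟩ := Nat.sq_mul_squarefree_of_pos (n := d.toNat)
    (by omega)
  have hdnat : d = (d.toNat : ℤ) := (Int.toNat_of_nonneg hdpos.le).symm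
  have hdes : d = (s : ℤ) ^ 2 * (e : ℤ) := by
    rw [hdnat, ← hse]; push_cast; ring
  set u : ℤ := (s : ℤ) * |u0| with hu
  set v : ℤ := (s : ℤ) * |v0| with hv
  have hu0ne : u0 ≠ 0 := by
    intro h; rw [h] at hA'sq; simp at hA'sq; omega
  have hv0ne : v0 ≠ 0 := by
    intro h; rw [h] at hN'sq; simp at hN'sq; omega
  have hspos' : (0 : ℤ) < (s : ℤ) := by exact_mod_cast hspos
  refine ⟨(e : ℤ), u, v, by exact_mod_cast hepos, ?_, ?_, ?_, ?_, ?_, ?_, ?_⟩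
  · exact mul_pos hspos' (abs_pos.mpr hu0ne)
  · exact mul_pos hspos' (abs_pos.mpr hv0ne)
  · exact Int.squarefree_natCast.mpr hesf
  · -- e ∣ b, via d ∣ b
    have hdb : d ∣ b := by
      have h1 : d ∣ b * B ^ 4 := by
        have : b * B ^ 4 = N - A ^ 2 := by rw [hN]; ring
        rw [this]
        exact dvd_sub hdN (by rw [sq]; exact hdA.mul_right A)
      have h2 : IsCoprime d (B ^ 4) :=
        (hcop.of_isCoprime_of_dvd_left hdA).pow_right
      exact h2.dvd_of_dvd_mul_right h1
    exact dvd_trans ⟨(s : ℤ) ^ 2, by rw [hdes]; ring⟩ hdb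
  · rw [hAeq, hA'sq, hdes, hu]
    rw [mul_pow, sq_abs]; ring
  · rw [hNeq, hN'sq, hdes, hv]
    rw [mul_pow, sq_abs]; ring
  · -- gcd(u, v) = s ∣ b
    have hcopuv : IsCoprime u0 v0 := by
      have h := hcop'
      rw [hA'sq, hN'sq] at h
      exact IsCoprime.of_isCoprime_of_dvd_right
        (IsCoprime.of_isCoprime_of_dvd_left h (dvd_pow_self u0 two_ne_zero))
        (dvd_pow_self v0 two_ne_zero)
    have hcopuv' : Int.gcd |u0| |v0| = 1 := by
      rw [Int.gcd, Int.natAbs_abs, Int.natAbs_abs, ← Int.gcd]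
      exact Int.isCoprime_iff_gcd_eq_one.mp hcopuv
    have hg : Int.gcd u v = s := by
      rw [hu, hv, Int.gcd_mul_left, hcopuv', mul_one, Int.natAbs_natCast]
    rw [hg]
    have hdb : d ∣ b := by
      have h1 : d ∣ b * B ^ 4 := by
        have : b * B ^ 4 = N - A ^ 2 := by rw [hN]; ring
        rw [this]
        exact dvd_sub hdN (by rw [sq]; exact hdA.mul_right A)
      have h2 : IsCoprime d (B ^ 4) :=
        (hcop.of_isCoprime_of_dvd_left hdA).pow_right
      exact h2.dvd_of_dvd_mul_right h1
    exact dvd_trans (dvd_trans (dvd_pow_self _ two_ne_zero) ⟨(e : ℤ), hdes⟩) hdb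
end

section
/- Let {B_m}_{m≥1} be a strong divisibility sequence of positive integers with the valuation property: for every prime q and all n, m ≥ 1, if v_q(B_n) > 0 then v_q(B_{nm}) = v_q(B_n) + v_q(m). Assume B_1 is divisible by a prime q, and assume that all but finitely many terms B_m have a primitive divisor (a prime dividing B_m but no B_j for j < m). Then for every finite set T of primes there exist a positive integer k and a prime p ∉ T such that: whenever B_m is an ℓ-th power for some prime ℓ > k, then p divides B_m. -/
/-- Lemma 3.5: in a strong divisibility sequence of positive integers satisfying the
valuation formula and Silverman's primitive divisor property, with q ∣ B₁, for every
finite set T of primes there exist k ≥ 1 and a prime p ∉ T such that whenever B_m is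
an ℓ-th power for a prime ℓ > k, then p ∣ B_m. -/
theorem stmt_8 (B : ℕ → ℕ) (hpos : ∀ m, 1 ≤ m → 0 < B m)
    (hstrong : ∀ m n, 1 ≤ m → 1 ≤ n → Nat.gcd (B m) (B n) = B (Nat.gcd m n))
    (hval : ∀ q : ℕ, q.Prime → ∀ n, 1 ≤ n → 0 < padicValNat q (B n) →
      ∀ m, 1 ≤ m → padicValNat q (B (n * m)) = padicValNat q (B n) + padicValNat q m)
    (q : ℕ) (hq : q.Prime) (hq1 : q ∣ B 1)
    (hfin : {m : ℕ | 1 ≤ m ∧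
      ¬ ∃ p : ℕ, p.Prime ∧ p ∣ B m ∧ ∀ j, 1 ≤ j → j < m → ¬ p ∣ B j}.Finite)
    (T : Finset ℕ) (hT : ∀ p ∈ T, p.Prime) :
    ∃ k : ℕ, 1 ≤ k ∧ ∃ p : ℕ, p.Prime ∧ p ∉ T ∧
      ∀ m, 1 ≤ m → ∀ ℓ : ℕ, ℓ.Prime → k < ℓ → (∃ w : ℕ, B m = w ^ ℓ) → p ∣ B m := by
  haveI : Fact q.Prime := ⟨hq⟩
  set e := padicValNat q (B 1) with he_def
  have he : 0 < e := one_le_padicValNat_of_dvd (hpos 1 le_rfl).ne' hq1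
  -- the union of bad sets
  have hsub : ∀ p ∈ T, ({m : ℕ | 1 ≤ m ∧ p ∣ B m ∧ ∀ j, 1 ≤ j → j < m → ¬ p ∣ B j}).Subsingleton := by
    intro p _ m1 hm1 m2 hm2
    by_contra hne
    rcases lt_or_gt_of_ne hne with h | h
    · exact hm2.2.2 m1 hm1.1 h hm1.2.1
    · exact hm1.2.2 m2 hm2.1 h hm2.2.1
  have hUfin : ({m : ℕ | 1 ≤ m ∧
      ¬ ∃ p : ℕ, p.Prime ∧ p ∣ B m ∧ ∀ j, 1 ≤ j → j < m → ¬ p ∣ B j} ∪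
      ⋃ p ∈ T, {m : ℕ | 1 ≤ m ∧ p ∣ B m ∧ ∀ j, 1 ≤ j → j < m → ¬ p ∣ B j}).Finite := by
    refine hfin.union (Set.Finite.biUnion T.finite_toSet ?_)
    intro p hp
    exact (hsub p hp).finite
  -- pick N with q^N not in the union
  obtain ⟨b, hb⟩ := hUfin.bddAbove
  set N := b + 1 with hN_def
  have hqN1 : 1 ≤ q ^ N := Nat.one_le_pow _ _ hq.pos
  have hqNnot : q ^ N ∉ ({m : ℕ | 1 ≤ m ∧
      ¬ ∃ p : ℕ, p.Prime ∧ p ∣ B m ∧ ∀ j, 1 ≤ j → j < m → ¬ p ∣ B j} ∪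
      ⋃ p ∈ T, {m : ℕ | 1 ≤ m ∧ p ∣ B m ∧ ∀ j, 1 ≤ j → j < m → ¬ p ∣ B j}) := by
    intro hmem
    have := hb hmem
    have h2 : b + 1 ≤ q ^ N := le_trans (by omega : b + 1 ≤ N) (Nat.lt_pow_self (n := N) hq.one_lt).le
    omega
  have hprim : ∃ p : ℕ, p.Prime ∧ p ∣ B (q ^ N) ∧ ∀ j, 1 ≤ j → j < q ^ N → ¬ p ∣ B j := by
    by_contra h
    exact hqNnot (Or.inl ⟨hqN1, h⟩)
  obtain ⟨p, hp, hpdvd, hpprim⟩ := hprim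
  have hpT : p ∉ T := by
    intro hpt
    exact hqNnot (Or.inr (Set.mem_biUnion hpt ⟨hqN1, hpdvd, hpprim⟩))
  refine ⟨N + e, by omega, p, hp, hpT, ?_⟩
  intro m hm ℓ hℓ hkℓ ⟨w, hw⟩
  have hw0 : w ≠ 0 := by
    intro h; subst h
    have := hpos m hm
    simp [hℓ.pos.ne'] at hw
    omega
  have hvm : padicValNat q (B m) = e + padicValNat q m := by
    have := hval q hq 1 le_rfl he m hm
    rwa [one_mul] at this
  have hpow : padicValNat q (B m) = ℓ * padicValNat q w := by
    rw [hw, padicValNat.pow _ _]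
  have hvw : 0 < padicValNat q w := by
    by_contra h
    push_neg at h
    interval_cases (padicValNat q w) <;> omega
  have hge : N < padicValNat q m := by
    have : ℓ ≤ ℓ * padicValNat q w := Nat.le_mul_of_pos_right _ hvw
    omega
  have hdvd : q ^ N ∣ m := dvd_trans (pow_dvd_pow q hge.le) pow_padicValNat_dvd
  have hgcd : Nat.gcd (q ^ N) m = q ^ N := Nat.gcd_eq_left hdvd
  have := hstrong (q ^ N) m hqN1 hm
  rw [hgcd] at this
  exact hpdvd.trans (this ▸ Nat.gcd_dvd_right (B (q ^ N)) (B m))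
end
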